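/- The immediate consequence operator preserves consistency: if A is a consistent term algebra then T_P(A) is consistent, for every program P whose rule instance closure is closed under total constructor substitutions. -/
import Mathlib


namespace CRWL

/-- Terms over variables `V`, constructor symbols `C`, and function symbols `F`. -/
inductive Tm (V C F : Type) : Type
  | var : V → Tm V C F
  | bot : Tm V C F
  | cons : C → List (Tm V C F) → Tm V C F
  | fn : F → List (Tm V C F) → Tm V C F

variable {V C F : Type}

/-- Approximation ordering on partial constructor terms. -/
inductive Approx : Tm V C F → Tm V C F → Prop
  | bot (t) : Approx .bot t
  | var (X) : Approx (.var X) (.var X)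
  | cons (c : C) {ss ts : List (Tm V C F)} : ss.length = ts.length →
      (∀ p ∈ ss.zip ts, Approx p.1 p.2) → Approx (.cons c ss) (.cons c ts)

/-- Partial constructor terms: no function symbols. -/
inductive IsCTm : Tm V C F → Prop
  | var (X) : IsCTm (.var X)
  | bot : IsCTm .bot
  | cons (c) {ts} : (∀ t ∈ ts, IsCTm t) → IsCTm (.cons c ts)

/-- Total constructor terms: no `⊥`, no function symbols. -/
inductive TotalC : Tm V C F → Prop
  | var (X) : TotalC (.var X)
  | cons (c) {ts} : (∀ t ∈ ts, TotalC t) → TotalC (.cons c ts)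

/-- Homomorphic extension of a substitution to terms. -/
def subst (θ : V → Tm V C F) : Tm V C F → Tm V C F
  | .var X => θ X
  | .bot => .bot
  | .cons c ts => .cons c (ts.attach.map (fun x => subst θ x.1))
  | .fn f ts => .fn f (ts.attach.map (fun x => subst θ x.1))
termination_by t => sizeOf t
decreasing_by all_goals (simp_wf; have := List.sizeOf_lt_of_mem x.2; omega)

/-- A (term-)algebra interpretation of the function symbols: cones of partial
constructor terms as results. -/
abbrev Alg (V C F : Type) := F → List (Tm V C F) → Set (Tm V C F)

/-- `Eval A θ e u` : `u` belongs to the evaluation cone `[[e]]^A_θ`. -/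
inductive Eval (A : Alg V C F) (θ : V → Tm V C F) : Tm V C F → Tm V C F → Prop
  | var {X u} : Approx u (θ X) → Eval A θ (.var X) u
  | bot : Eval A θ .bot .bot
  | cons {c : C} {es us : List (Tm V C F)} {u} : es.length = us.length →
      (∀ p ∈ es.zip us, Eval A θ p.1 p.2) →
      Approx u (.cons c us) → Eval A θ (.cons c es) u
  | fn {f : F} {es us : List (Tm V C F)} {u} : es.length = us.length →
      (∀ p ∈ es.zip us, Eval A θ p.1 p.2) →
      u ∈ A f us → Eval A θ (.fn f es) u

/-- `A` is a term algebra: every value is a cone (contains `⊥`, down-closed) and the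
interpretations are monotone wrt the approximation ordering on arguments. -/
def IsTAlg (A : Alg V C F) : Prop :=
  ∀ f ts, Tm.bot ∈ A f ts ∧
    (∀ u ∈ A f ts, ∀ v, Approx v u → v ∈ A f ts) ∧
    (∀ ts', ts.length = ts'.length → (∀ p ∈ ts.zip ts', Approx p.1 p.2) →
      A f ts ⊆ A f ts')

/-- A conditional rewrite rule `head(lhs) → rhs ⇐ cond`. -/
structure Rul (V C F : Type) where
  head : F
  lhs : List (Tm V C F)
  rhs : Tm V C F
  cond : List (Tm V C F × Tm V C F)

/-- Satisfaction of a joinability statement `a ⋈ b` in `A` under valuation `θ`. -/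
def Sat (A : Alg V C F) (θ : V → Tm V C F) (a b : Tm V C F) : Prop :=
  ∃ t, TotalC t ∧ Eval A θ a t ∧ Eval A θ b t

/-- The immediate consequence operator of a program `R`. -/
def TR (R : Set (Rul V C F)) (A : Alg V C F) : Alg V C F :=
  fun f ts => insert Tm.bot
    { u | ∃ ru ∈ R, ru.head = f ∧ ∃ θ : V → Tm V C F,
        (∀ X, IsCTm (θ X)) ∧
        ru.lhs.length = ts.length ∧
        (∀ p ∈ ru.lhs.zip ts, Approx (subst θ p.1) p.2) ∧
        (∀ p ∈ ru.cond, Sat A Tm.var (subst θ p.1) (subst θ p.2)) ∧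
        Eval A Tm.var (subst θ ru.rhs) u }

/-- A term algebra is consistent iff `(f^A(t̄))θ ⊆ f^A(t̄θ)` for every total
constructor substitution `θ`. -/
def Consistent {V C F : Type} (A : Alg V C F) : Prop :=
  ∀ f ts (θ : V → Tm V C F), (∀ X, TotalC (θ X)) →
    ∀ u ∈ A f ts, subst θ u ∈ A f (ts.map (subst θ))

theorem subst_var (θ : V → Tm V C F) (X : V) : subst θ (.var X) = θ X := by rw [subst]

theorem subst_bot (θ : V → Tm V C F) : subst θ (.bot : Tm V C F) = .bot := by rw [subst]

theorem subst_cons (θ : V → Tm V C F) (c : C) (ts : List (Tm V C F)) :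
    subst θ (.cons c ts) = .cons c (ts.map (subst θ)) := by
  rw [subst]; simp

theorem subst_fn (θ : V → Tm V C F) (f : F) (ts : List (Tm V C F)) :
    subst θ (.fn f ts) = .fn f (ts.map (subst θ)) := by
  rw [subst]; simp

theorem tm_ind {motive : Tm V C F → Prop}
    (hvar : ∀ X, motive (.var X)) (hbot : motive .bot)
    (hcons : ∀ c ts, (∀ t ∈ ts, motive t) → motive (.cons c ts))
    (hfn : ∀ f ts, (∀ t ∈ ts, motive t) → motive (.fn f ts)) :
    ∀ t, motive t
  | .var X => hvar X
  | .bot => hbot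
  | .cons c ts => hcons c ts (fun t ht => tm_ind hvar hbot hcons hfn t)
  | .fn f ts => hfn f ts (fun t ht => tm_ind hvar hbot hcons hfn t)
termination_by t => sizeOf t
decreasing_by all_goals (simp_wf; have := List.sizeOf_lt_of_mem ht; omega)

theorem subst_comp (θ σ : V → Tm V C F) (t : Tm V C F) :
    subst θ (subst σ t) = subst (fun X => subst θ (σ X)) t := by
  induction t using tm_ind with
  | hvar X => simp [subst]
  | hbot => simp [subst]
  | hcons c ts ih =>
      rw [subst_cons, subst_cons, subst_cons, List.map_map]
      exact congrArg _ (List.map_congr_left fun t ht => ih t ht)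
  | hfn f ts ih =>
      rw [subst_fn, subst_fn, subst_fn, List.map_map]
      exact congrArg _ (List.map_congr_left fun t ht => ih t ht)

theorem mem_zip_self {l : List (Tm V C F)} {p : Tm V C F × Tm V C F}
    (hp : p ∈ l.zip l) : p.2 = p.1 ∧ p.1 ∈ l := by
  induction l with
  | nil => simp at hp
  | cons a l ih =>
      rw [List.zip_cons_cons] at hp
      rcases List.mem_cons.1 hp with rfl | h
      · simp
      · rcases ih h with ⟨h1, h2⟩; exact ⟨h1, List.mem_cons_of_mem _ h2⟩

theorem totalC_isCTm {t : Tm V C F} (h : TotalC t) : IsCTm t := by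
  induction h with
  | var X => exact .var X
  | cons c _ ih => exact .cons c ih

theorem approx_refl_ctm {t : Tm V C F} (h : IsCTm t) : Approx t t := by
  induction h with
  | var X => exact .var X
  | bot => exact .bot _
  | cons c _ ih =>
      exact .cons c rfl fun p hp => by
        rcases mem_zip_self hp with ⟨h1, h2⟩
        rw [h1] at *; exact ih _ h2

theorem totalC_subst {θ : V → Tm V C F} (hθ : ∀ X, TotalC (θ X))
    {t : Tm V C F} (h : TotalC t) : TotalC (subst θ t) := by
  induction h with
  | var X => rw [subst_var]; exact hθ X
  | cons c _ ih =>
      rw [subst_cons]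
      exact .cons c fun s hs => by
        rcases List.mem_map.1 hs with ⟨a, ha, rfl⟩; exact ih a ha

theorem isCTm_subst {θ : V → Tm V C F} (hθ : ∀ X, IsCTm (θ X))
    {t : Tm V C F} (h : IsCTm t) : IsCTm (subst θ t) := by
  induction h with
  | var X => rw [subst_var]; exact hθ X
  | bot => rw [subst_bot]; exact .bot
  | cons c _ ih =>
      rw [subst_cons]
      exact .cons c fun s hs => by
        rcases List.mem_map.1 hs with ⟨a, ha, rfl⟩; exact ih a ha

theorem approx_subst {θ : V → Tm V C F} (hθ : ∀ X, Approx (θ X) (θ X))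
    {a b : Tm V C F} (h : Approx a b) : Approx (subst θ a) (subst θ b) := by
  induction h with
  | bot t => rw [subst_bot]; exact .bot _
  | var X => rw [subst_var]; exact hθ X
  | cons c hlen _ ih =>
      rw [subst_cons, subst_cons]
      refine .cons c (by simp [hlen]) fun p hp => ?_
      rw [List.zip_map] at hp
      rcases List.mem_map.1 hp with ⟨q, hq, rfl⟩
      exact ih q hq

/-- Evaluating a partial constructor term under the identity valuation yields
everything below it. -/
theorem eval_ctm (A : Alg V C F) {t : Tm V C F} (ht : IsCTm t) :
    ∀ s, Approx s t → Eval A Tm.var t s := by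
  induction ht with
  | var X => exact fun s hs => .var hs
  | bot => intro s hs; cases hs; exact .bot
  | cons c hts ih =>
      intro s hs
      refine .cons rfl (fun p hp => ?_) hs
      rcases mem_zip_self hp with ⟨h1, h2⟩
      rw [h1]
      exact ih _ h2 _ (approx_refl_ctm (hts _ h2))

/-- Evaluation commutes with total constructor substitutions in consistent
algebras. -/
theorem eval_subst {A : Alg V C F} (hA : Consistent A)
    {θ : V → Tm V C F} (hθ : ∀ X, TotalC (θ X))
    {e u : Tm V C F} (h : Eval A Tm.var e u) :
    Eval A Tm.var (subst θ e) (subst θ u) := by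
  have hrefl : ∀ X, Approx (θ X) (θ X) := fun X => approx_refl_ctm (totalC_isCTm (hθ X))
  induction h with
  | var hu =>
      rename_i X u
      have : Approx (subst θ u) (θ X) := by
        have := approx_subst hrefl hu
        simpa [subst] using this
      rw [subst_var]
      exact eval_ctm A (totalC_isCTm (hθ X)) _ this
  | bot => rw [subst_bot]; exact .bot
  | cons hlen he hu ih =>
      rename_i c es us u'
      rw [subst_cons]
      refine .cons (us := us.map (subst θ)) (by simp [hlen]) (fun p hp => ?_) ?_
      · rw [List.zip_map] at hp
        rcases List.mem_map.1 hp with ⟨q, hq, rfl⟩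
        exact ih q hq
      · have := approx_subst hrefl hu
        rwa [subst_cons] at this
  | fn hlen he hu ih =>
      rename_i f es us u'
      rw [subst_fn]
      refine .fn (us := us.map (subst θ)) (by simp [hlen]) (fun p hp => ?_) ?_
      · rw [List.zip_map] at hp
        rcases List.mem_map.1 hp with ⟨q, hq, rfl⟩
        exact ih q hq
      · exact hA _ _ θ hθ _ hu

/-- The immediate consequence operator preserves consistency.  (In this formalization
the instance closure used by `TR` is closed under constructor substitutions by
construction.) -/
theorem TR_preserves_consistent {V C F : Type} (R : Set (Rul V C F))
    (A : Alg V C F) (hA : Consistent A) : Consistent (TR R A) := by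
  intro f ts θ hθ u hu
  have hrefl : ∀ X, Approx (θ X) (θ X) := fun X => approx_refl_ctm (totalC_isCTm (hθ X))
  simp only [TR, Set.mem_insert_iff, Set.mem_setOf_eq] at hu ⊢
  rcases hu with rfl | ⟨ru, hru, hhead, σ, hσ, hlen, happ, hcond, heval⟩
  · left; simp [subst]
  · right
    refine ⟨ru, hru, hhead, fun X => subst θ (σ X),
      fun X => isCTm_subst (fun Y => totalC_isCTm (hθ Y)) (hσ X),
      by simpa using hlen, fun p hp => ?_, fun p hp => ?_, ?_⟩
    · rw [List.zip_map_right] at hp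
      rcases List.mem_map.1 hp with ⟨q, hq, rfl⟩
      show Approx (subst _ q.1) (subst θ q.2)
      rw [← subst_comp]
      exact approx_subst hrefl (happ q hq)
    · rcases hcond p hp with ⟨t, ht, ha, hb⟩
      refine ⟨subst θ t, totalC_subst hθ ht, ?_, ?_⟩
      · rw [← subst_comp]; exact eval_subst hA hθ ha
      · rw [← subst_comp]; exact eval_subst hA hθ hb
    · rw [← subst_comp]; exact eval_subst hA hθ heval


end CRWL
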